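/- If μ is a Radon measure on ℝ^d with non-empty support, then there exists x ∈ spt μ such that L^d ∉ Tan(μ,x) or L^{d,+} ∉ Tan(μ,x), where L^d is Lebesgue measure on ℝ^d and L^{d,+} is L^d restricted to the positive orthant ℝ^{d,+} = {(x_1,…,x_d) : x_i ≥ 0 for all i}. -/

import Mathlib

open MeasureTheory Filter Topology Metric Set

noncomputable section

abbrev Ed (d : ℕ) := EuclideanSpace ℝ (Fin d)

/-- Weak convergence of a sequence of measures, tested against continuous
compactly supported functions. -/
def WeakTendsto {d : ℕ} (μs : ℕ → Measure (Ed d)) (ν : Measure (Ed d)) : Prop :=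
  ∀ φ : Ed d → ℝ, Continuous φ → HasCompactSupport φ →
    Tendsto (fun i => ∫ x, φ x ∂(μs i)) atTop (𝓝 (∫ x, φ x ∂ν))

/-- The measure `c • T_{x,r♯} μ`, where `T_{x,r♯}μ(A) = μ(rA + x)`. -/
def blowup {d : ℕ} (μ : Measure (Ed d)) (x : Ed d) (r c : ℝ) : Measure (Ed d) :=
  ENNReal.ofReal c • Measure.map (fun y => r⁻¹ • (y - x)) μ

/-- `ν` is a tangent measure of `μ` at `x`. -/
def IsTangentMeasure {d : ℕ} (μ : Measure (Ed d)) (x : Ed d) (ν : Measure (Ed d)) : Prop :=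
  IsLocallyFiniteMeasure ν ∧ ν ≠ 0 ∧
    ∃ r c : ℕ → ℝ, (∀ i, 0 < r i) ∧ StrictAnti r ∧ Tendsto r atTop (𝓝 0) ∧
      (∀ i, 0 < c i) ∧ WeakTendsto (fun i => blowup μ x (r i) (c i)) ν

/-- The support of a measure. -/
def sptM {d : ℕ} (μ : Measure (Ed d)) : Set (Ed d) :=
  {x | ∀ r > 0, 0 < μ (closedBall x r)}

/-- The positive orthant `ℝ^{d,+}`. -/
def orthant (d : ℕ) : Set (Ed d) := {x | ∀ i, 0 ≤ x i}

/-!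
Fix a coordinate direction `i`. Call `(x, σ)` a corner of `μ` when the blow-up of `μ` at `x` at
scale `σ` resembles `L^{d,+}` in a few quantitative respects: it is doubling on the unit ball, puts
almost no mass in the half-space `{u_i ≤ -1/20}`, puts a definite proportion of its mass near
`e_i / 10` and some mass near `3 e_i / 10`. Weak convergence to `L^{d,+}` makes the blow-ups along
a tangent sequence eventually corners, so `L^{d,+} ∈ Tan(μ, x)` gives corners at `x` at
arbitrarily small scales.

Two corners cannot sit in one particular configuration: if `(x, σ)` is a corner, `z` is close to
`x + (3σ/10) e_i` and `σ/1000 ≤ τ ≤ 11σ/10`, then the ball around `x + (σ/10) e_i`, which carries a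
fixed proportion of the mass of `B(x, σ)`, lies in the almost empty half-space of `(z, τ)`, and
doubling is violated. So, recentring from a corner of maximal scale to `x + (3σ/10) e_i` clears
all corners over a whole range of scales. Iterating at geometrically decreasing scales gives a
Cauchy sequence whose limit lies in `spt μ` and is a corner at no scale `≤ 1`; there `L^{d,+}` is
not a tangent measure.
-/

open scoped ENNReal

section

variable {d : ℕ}

lemma abs_apply_sub_apply_le_dist (u v : Ed d) (i : Fin d) : |u i - v i| ≤ dist u v := by
  simpa [Real.dist_eq] using PiLp.dist_apply_le u v i

lemma sptM_eq_support (μ : Measure (Ed d)) : sptM μ = μ.support := by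
  ext x
  exact (nhds_basis_closedBall.mem_measureSupport).symm

lemma isClosed_sptM (μ : Measure (Ed d)) : IsClosed (sptM μ) := by
  rw [sptM_eq_support]
  exact Measure.isClosed_support

lemma exists_mem_sptM_dist_le {μ : Measure (Ed d)} {c : Ed d} {ρ : ℝ}
    (h : μ (closedBall c ρ) ≠ 0) : ∃ s ∈ sptM μ, dist s c ≤ ρ := by
  obtain ⟨s, hs, hsμ⟩ := Measure.nonempty_inter_support_of_pos (pos_iff_ne_zero.2 h)
  exact ⟨s, (sptM_eq_support μ).symm ▸ hsμ, hs⟩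

lemma isClosed_orthant : IsClosed (orthant d) :=
  isClosed_Ici.preimage (f := WithLp.ofLp) (by fun_prop)

lemma single_mem_orthant (i : Fin d) {a : ℝ} (ha : 0 ≤ a) :
    EuclideanSpace.single i a ∈ orthant d := fun j => by
  simp only [PiLp.single_apply]
  split_ifs <;> simp [ha]

lemma volume_restrict_orthant_ball_pos {c : Ed d} (hc : c ∈ orthant d) {r : ℝ} (hr : 0 < r) :
    0 < volume.restrict (orthant d) (ball c r) := by
  set one : Ed d := WithLp.toLp 2 fun _ => 1
  set t := r / (2 * (‖one‖ + 1))
  have ht : 0 < t := by positivity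
  have htone : t * ‖one‖ < r := by
    rw [div_mul_eq_mul_div, div_lt_iff₀ (by positivity)]
    nlinarith [norm_nonneg one]
  have hopen : IsOpen (ball c r ∩ ⋂ j, {u : Ed d | 0 < u j}) :=
    isOpen_ball.inter (isOpen_iInter_of_finite fun j => isOpen_lt continuous_const (by fun_prop))
  have hmem : c + t • one ∈ ball c r ∩ ⋂ j, {u : Ed d | 0 < u j} := by
    refine ⟨?_, mem_iInter.2 fun j => ?_⟩
    · rwa [mem_ball, dist_self_add_left, norm_smul, Real.norm_of_nonneg ht.le]
    · simpa [one] using add_pos_of_nonneg_of_pos (hc j) ht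
  rw [Measure.restrict_apply isOpen_ball.measurableSet]
  refine (hopen.measure_pos volume ⟨_, hmem⟩).trans_le (measure_mono ?_)
  exact inter_subset_inter_right _ fun u hu j => (mem_iInter.1 hu j).le

lemma volume_restrict_orthant_closedBall_ne_zero {c : Ed d} (hc : c ∈ orthant d) {r : ℝ}
    (hr : 0 < r) : volume.restrict (orthant d) (closedBall c r) ≠ 0 :=
  ((volume_restrict_orthant_ball_pos hc hr).trans_le (measure_mono ball_subset_closedBall)).ne'

lemma volume_restrict_orthant_setOf_apply_lt_eq_zero (i : Fin d) {b : ℝ} (hb : b ≤ 0) :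
    volume.restrict (orthant d) {u | u i < b} = 0 := by
  rw [Measure.restrict_apply' isClosed_orthant.measurableSet]
  convert measure_empty (μ := (volume : Measure (Ed d)))
  exact eq_empty_of_forall_notMem fun u hu => (hu.2 i).not_gt (hu.1.trans_le hb)

section Thickening

variable {X : Type*} [PseudoMetricSpace X] {E : Set X} {δ : ℝ}

lemma hasCompactSupport_thickenedIndicator [ProperSpace X] (hδ : 0 < δ)
    (hE : Bornology.IsBounded E) : HasCompactSupport fun u => (thickenedIndicator hδ E u : ℝ) :=
  HasCompactSupport.intro (isCompact_of_isClosed_isBounded isClosed_cthickening hE.cthickening)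
    fun _ hu => by
      rw [thickenedIndicator_zero hδ E fun h => hu (thickening_subset_cthickening δ E h),
        NNReal.coe_zero]

lemma measure_le_ofReal_integral_thickenedIndicator [MeasurableSpace X] [OpensMeasurableSpace X]
    [ProperSpace X] (m : Measure X) [IsFiniteMeasureOnCompacts m] (hδ : 0 < δ)
    (hE : Bornology.IsBounded E) :
    m E ≤ ENNReal.ofReal (∫ u, (thickenedIndicator hδ E u : ℝ) ∂m) :=
  ((NNReal.continuous_coe.comp (thickenedIndicator hδ E).continuous).integrable_of_hasCompactSupport
    (hasCompactSupport_thickenedIndicator hδ hE)).measure_le_integral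
    (ae_of_all _ fun _ => NNReal.coe_nonneg _) fun u hu => by
      simp [thickenedIndicator_one hδ E hu]

lemma ofReal_integral_thickenedIndicator_le [MeasurableSpace X] (m : Measure X) (hδ : 0 < δ) :
    ENNReal.ofReal (∫ u, (thickenedIndicator hδ E u : ℝ) ∂m) ≤ m (thickening δ E) :=
  integral_le_measure (fun u _ => by exact_mod_cast thickenedIndicator_le_one hδ E u)
    fun u hu => by simp [thickenedIndicator_zero hδ E hu]

end Thickening

section WeakTendsto

variable {ms : ℕ → Measure (Ed d)} {ν : Measure (Ed d)} {E : Set (Ed d)} {δ : ℝ}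

lemma WeakTendsto.tendsto_ofReal_integral_thickenedIndicator (h : WeakTendsto ms ν)
    (hδ : 0 < δ) (hE : Bornology.IsBounded E) :
    Tendsto (fun n => ENNReal.ofReal (∫ u, (thickenedIndicator hδ E u : ℝ) ∂ms n)) atTop
      (𝓝 (ENNReal.ofReal (∫ u, (thickenedIndicator hδ E u : ℝ) ∂ν))) :=
  (ENNReal.continuous_ofReal.tendsto _).comp
    (h _ (NNReal.continuous_coe.comp (thickenedIndicator hδ E).continuous)
      (hasCompactSupport_thickenedIndicator hδ hE))

lemma WeakTendsto.eventually_lt_measure_thickening (h : WeakTendsto ms ν)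
    [IsLocallyFiniteMeasure ν] (hδ : 0 < δ) (hE : Bornology.IsBounded E) {c : ℝ≥0∞}
    (hc : c < ν E) : ∀ᶠ n in atTop, c < ms n (thickening δ E) := by
  filter_upwards [(h.tendsto_ofReal_integral_thickenedIndicator hδ hE).eventually_const_lt
    (hc.trans_le (measure_le_ofReal_integral_thickenedIndicator ν hδ hE))] with n hn
  exact hn.trans_le (ofReal_integral_thickenedIndicator_le _ hδ)

lemma WeakTendsto.eventually_measure_lt (h : WeakTendsto ms ν)
    (hms : ∀ n, IsFiniteMeasureOnCompacts (ms n)) (hδ : 0 < δ) (hE : Bornology.IsBounded E)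
    {c : ℝ≥0∞} (hc : ν (thickening δ E) < c) : ∀ᶠ n in atTop, ms n E < c := by
  filter_upwards [(h.tendsto_ofReal_integral_thickenedIndicator hδ hE).eventually_lt_const
    ((ofReal_integral_thickenedIndicator_le ν hδ).trans_lt hc)] with n hn
  exact (measure_le_ofReal_integral_thickenedIndicator (ms n) hδ hE).trans_lt hn

lemma WeakTendsto.eventually_lt_measure_closedBall [IsLocallyFiniteMeasure ν]
    (h : WeakTendsto ms ν) (a : Ed d) {ρ : ℝ} (hρ : 0 < ρ) {c : ℝ≥0∞}
    (hc : c < ν (closedBall a ρ)) :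
    ∀ᶠ n in atTop, c < ms n (closedBall a (2 * ρ)) := by
  filter_upwards [h.eventually_lt_measure_thickening hρ isBounded_closedBall hc] with n hn
  rw [thickening_closedBall hρ hρ.le, ← two_mul] at hn
  exact hn.trans_le (measure_mono ball_subset_closedBall)

lemma WeakTendsto.eventually_measure_closedBall_inter_lt
    (h : WeakTendsto ms (volume.restrict (orthant d)))
    (hms : ∀ n, IsFiniteMeasureOnCompacts (ms n)) (i : Fin d) (R : ℝ) {b : ℝ} (hb : b < 0)
    {c : ℝ≥0∞} (hc : c ≠ 0) :
    ∀ᶠ n in atTop, ms n (closedBall 0 R ∩ {u | u i ≤ b}) < c := by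
  have hb₂ : b / 2 < 0 := by linarith
  refine h.eventually_measure_lt hms (neg_pos.2 hb₂)
    (isBounded_closedBall.subset inter_subset_left) (lt_of_eq_of_lt (measure_mono_null ?_
      (volume_restrict_orthant_setOf_apply_lt_eq_zero i hb₂.le)) (pos_iff_ne_zero.2 hc))
  intro u hu
  obtain ⟨v, hv, huv⟩ := mem_thickening_iff.1 hu
  have hvi : v i ≤ b := hv.2
  have := (abs_lt.1 ((abs_apply_sub_apply_le_dist u v i).trans_lt huv)).2
  show u i < b / 2
  linarith

end WeakTendsto

section Blowup

variable {μ : Measure (Ed d)} {x : Ed d} {r : ℝ}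

lemma preimage_rescale_closedBall (x : Ed d) (hr : 0 < r) (a : Ed d) (ρ : ℝ) :
    (fun y : Ed d => r⁻¹ • (y - x)) ⁻¹' closedBall a ρ = closedBall (x + r • a) (r * ρ) := by
  ext y
  have : r⁻¹ • (y - x) - a = r⁻¹ • (y - (x + r • a)) := by
    rw [smul_sub, smul_sub, smul_add, inv_smul_smul₀ hr.ne']
    abel
  rw [mem_preimage, mem_closedBall, mem_closedBall, dist_eq_norm, this, norm_smul,
    Real.norm_of_nonneg (inv_nonneg.2 hr.le), inv_mul_le_iff₀ hr, dist_eq_norm]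

lemma preimage_rescale_setOf_apply_le (x : Ed d) (hr : 0 < r) (i : Fin d) (b : ℝ) :
    (fun y : Ed d => r⁻¹ • (y - x)) ⁻¹' {u | u i ≤ b} = {y | y i ≤ x i + r * b} := by
  ext y
  simp only [mem_preimage, mem_ofPred_eq, PiLp.smul_apply, PiLp.sub_apply, smul_eq_mul,
    inv_mul_le_iff₀ hr]
  constructor <;> intro h <;> linarith

lemma blowup_apply (μ : Measure (Ed d)) (x : Ed d) (r c : ℝ) {S : Set (Ed d)}
    (hS : MeasurableSet S) :
    blowup μ x r c S = ENNReal.ofReal c * μ ((fun y : Ed d => r⁻¹ • (y - x)) ⁻¹' S) := by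
  rw [blowup, Measure.smul_apply, Measure.map_apply (by fun_prop) hS, smul_eq_mul]

lemma blowup_apply_closedBall (μ : Measure (Ed d)) (x : Ed d) (hr : 0 < r) (c : ℝ) (a : Ed d)
    (ρ : ℝ) :
    blowup μ x r c (closedBall a ρ) = ENNReal.ofReal c * μ (closedBall (x + r • a) (r * ρ)) := by
  rw [blowup_apply μ x r c measurableSet_closedBall, preimage_rescale_closedBall x hr]

lemma blowup_apply_closedBall_inter (μ : Measure (Ed d)) (x : Ed d) (hr : 0 < r) (c : ℝ)
    (a : Ed d) (ρ : ℝ) (i : Fin d) (b : ℝ) :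
    blowup μ x r c (closedBall a ρ ∩ {u | u i ≤ b}) =
      ENNReal.ofReal c * μ (closedBall (x + r • a) (r * ρ) ∩ {y | y i ≤ x i + r * b}) := by
  rw [blowup_apply μ x r c
    (measurableSet_closedBall.inter (measurableSet_le (by fun_prop) measurable_const)),
    preimage_inter, preimage_rescale_closedBall x hr, preimage_rescale_setOf_apply_le x hr]

lemma blowup_eq_smul (μ : Measure (Ed d)) (x : Ed d) (r c : ℝ) :
    blowup μ x r c = ENNReal.ofReal c • blowup μ x r 1 := by
  simp [blowup]

lemma isFiniteMeasureOnCompacts_blowup [IsLocallyFiniteMeasure μ] (hr : 0 < r) (c : ℝ) :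
    IsFiniteMeasureOnCompacts (blowup μ x r c) := by
  refine ⟨fun K hK => ?_⟩
  obtain ⟨R, hR⟩ := hK.isBounded.subset_closedBall 0
  refine (measure_mono hR).trans_lt ?_
  rw [blowup_apply_closedBall μ x hr]
  exact ENNReal.mul_lt_top ENNReal.ofReal_lt_top measure_closedBall_lt_top

end Blowup

def witnessPt (i : Fin d) : Ed d := EuclideanSpace.single i (1 / 10)

def recentrePt (i : Fin d) : Ed d := EuclideanSpace.single i (3 / 10)

lemma witnessPt_mem_orthant (i : Fin d) : witnessPt i ∈ orthant d :=
  single_mem_orthant i (by norm_num)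

lemma recentrePt_mem_orthant (i : Fin d) : recentrePt i ∈ orthant d :=
  single_mem_orthant i (by norm_num)

lemma dist_witnessPt_recentrePt (i : Fin d) : dist (witnessPt i) (recentrePt i) = 1 / 5 := by
  rw [witnessPt, recentrePt, PiLp.dist_single_same, Real.dist_eq]
  norm_num [abs_of_neg]

lemma norm_recentrePt (i : Fin d) : ‖recentrePt i‖ = 3 / 10 := by
  rw [recentrePt, PiLp.norm_single, Real.norm_of_nonneg (by norm_num)]

-- Weak convergence to `L^{d,+}` bounds the mass of `closedBall 0 2` above through `closedBall 0 3`,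
-- and the masses of `closedBall 0 1` and `closedBall (witnessPt i) (1 / 100)` below through the
-- concentric balls of half the radius; the constants are the resulting ratios.
def doublingConst (d : ℕ) : ℝ≥0∞ :=
  (volume.restrict (orthant d) (closedBall 0 3) + 1) /
    (volume.restrict (orthant d) (closedBall 0 (1 / 2)) / 2)

def witnessConst (i : Fin d) : ℝ≥0∞ :=
  volume.restrict (orthant d) (closedBall (witnessPt i) (1 / 200)) / 2 /
    (volume.restrict (orthant d) (closedBall 0 3) + 1)

def vacuumConst (i : Fin d) : ℝ≥0∞ := witnessConst i / 2 / doublingConst d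

lemma doublingConst_ne_zero : doublingConst d ≠ 0 := by
  simp [doublingConst, ENNReal.div_eq_zero_iff, ENNReal.div_eq_top, measure_closedBall_lt_top.ne]

lemma doublingConst_ne_top : doublingConst d ≠ ⊤ :=
  ENNReal.div_ne_top (by simp [measure_closedBall_lt_top.ne]) (by
    simpa using volume_restrict_orthant_closedBall_ne_zero (d := d) (fun _ => le_rfl)
      (by norm_num : (0 : ℝ) < 1 / 2))

lemma witnessConst_ne_zero (i : Fin d) : witnessConst i ≠ 0 := by
  simpa [witnessConst, ENNReal.div_eq_zero_iff, measure_closedBall_lt_top.ne] using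
    volume_restrict_orthant_closedBall_ne_zero (witnessPt_mem_orthant i)
      (by norm_num : (0 : ℝ) < 1 / 200)

lemma witnessConst_ne_top (i : Fin d) : witnessConst i ≠ ⊤ :=
  ENNReal.div_ne_top (ENNReal.div_ne_top measure_closedBall_lt_top.ne two_ne_zero) (by simp)

lemma vacuumConst_ne_zero (i : Fin d) : vacuumConst i ≠ 0 := by
  simp [vacuumConst, ENNReal.div_eq_zero_iff, witnessConst_ne_zero, doublingConst_ne_top]

lemma vacuumConst_mul_doublingConst (i : Fin d) :
    vacuumConst i * doublingConst d = witnessConst i / 2 :=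
  ENNReal.div_mul_cancel doublingConst_ne_zero doublingConst_ne_top

structure IsUnitCorner (i : Fin d) (m : Measure (Ed d)) : Prop where
  closedBall_ne_zero : m (closedBall 0 1) ≠ 0
  doubling : m (closedBall 0 2) ≤ doublingConst d * m (closedBall 0 1)
  vacuum : m (closedBall 0 1000 ∩ {u | u i ≤ -(1 / 20)}) ≤ vacuumConst i * m (closedBall 0 1)
  witness : witnessConst i * m (closedBall 0 1) ≤ m (closedBall (witnessPt i) (1 / 100))
  recentre_ne_zero : m (closedBall (recentrePt i) (1 / 100)) ≠ 0

lemma IsUnitCorner.of_smul {i : Fin d} {m : Measure (Ed d)} {k : ℝ≥0∞} (hk : k ≠ ⊤)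
    (h : IsUnitCorner i (k • m)) : IsUnitCorner i m := by
  obtain ⟨h₁, h₂, h₃, h₄, h₅⟩ := h
  simp only [Measure.smul_apply, smul_eq_mul, mul_left_comm _ k] at h₁ h₂ h₃ h₄ h₅
  have hk₀ : k ≠ 0 := left_ne_zero_of_mul h₁
  exact ⟨right_ne_zero_of_mul h₁, (ENNReal.mul_le_mul_iff_right hk₀ hk).1 h₂,
    (ENNReal.mul_le_mul_iff_right hk₀ hk).1 h₃, (ENNReal.mul_le_mul_iff_right hk₀ hk).1 h₄,
    right_ne_zero_of_mul h₅⟩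

def IsCornerAt (i : Fin d) (μ : Measure (Ed d)) (x : Ed d) (σ : ℝ) : Prop :=
  0 < σ ∧ IsUnitCorner i (blowup μ x σ 1)

lemma WeakTendsto.eventually_isUnitCorner {ms : ℕ → Measure (Ed d)}
    (h : WeakTendsto ms (volume.restrict (orthant d)))
    (hms : ∀ n, IsFiniteMeasureOnCompacts (ms n)) (i : Fin d) :
    ∀ᶠ n in atTop, IsUnitCorner i (ms n) := by
  set ν := volume.restrict (orthant d)
  have hν₀ : ν (closedBall 0 (1 / 2)) ≠ 0 :=
    volume_restrict_orthant_closedBall_ne_zero (fun _ => le_rfl) (by norm_num)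
  have hν₃ : ν (closedBall 0 3) + 1 ≠ ⊤ :=
    ENNReal.add_ne_top.2 ⟨measure_closedBall_lt_top.ne, ENNReal.one_ne_top⟩
  have hdouble : ∀ᶠ n in atTop, ms n (closedBall 0 2) < ν (closedBall 0 3) + 1 := by
    refine h.eventually_measure_lt hms one_pos isBounded_closedBall ?_
    rw [thickening_closedBall one_pos (by norm_num)]
    exact (measure_mono (by norm_num [ball_subset_closedBall])).trans_lt
      (ENNReal.lt_add_right measure_closedBall_lt_top.ne one_ne_zero)
  filter_upwards [h.eventually_lt_measure_closedBall 0 (by norm_num : (0 : ℝ) < 1 / 2)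
      (ENNReal.half_lt_self hν₀ measure_closedBall_lt_top.ne), hdouble,
    h.eventually_measure_closedBall_inter_lt hms i 1000 (by norm_num : -(1 / 20 : ℝ) < 0)
      (c := vacuumConst i * (ν (closedBall 0 (1 / 2)) / 2))
      (mul_ne_zero (vacuumConst_ne_zero i) (by simpa using hν₀)),
    h.eventually_lt_measure_closedBall (witnessPt i) (by norm_num : (0 : ℝ) < 1 / 200)
      (ENNReal.half_lt_self (volume_restrict_orthant_closedBall_ne_zero (witnessPt_mem_orthant i)
        (by norm_num)) measure_closedBall_lt_top.ne),
    h.eventually_lt_measure_closedBall (recentrePt i) (by norm_num : (0 : ℝ) < 1 / 200)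
      (pos_iff_ne_zero.2 (volume_restrict_orthant_closedBall_ne_zero (recentrePt_mem_orthant i)
        (by norm_num)))] with n h₁ h₂ h₃ h₄ h₅
  norm_num at h₁ h₄ h₅
  refine ⟨(pos_of_gt h₁).ne', ?_, h₃.le.trans (by gcongr), ?_, h₅.ne'⟩
  · calc ms n (closedBall 0 2) ≤ ν (closedBall 0 3) + 1 := h₂.le
      _ = doublingConst d * (ν (closedBall 0 (1 / 2)) / 2) :=
        (ENNReal.div_mul_cancel (by simpa using hν₀)
          (ENNReal.div_ne_top measure_closedBall_lt_top.ne two_ne_zero)).symm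
      _ ≤ doublingConst d * ms n (closedBall 0 1) := by gcongr
  · calc witnessConst i * ms n (closedBall 0 1)
        ≤ witnessConst i * (ν (closedBall 0 3) + 1) := by
          gcongr
          exact (measure_mono (closedBall_subset_closedBall one_le_two)).trans h₂.le
      _ = ν (closedBall (witnessPt i) (1 / 200)) / 2 := ENNReal.div_mul_cancel (by simp) hν₃
      _ ≤ ms n (closedBall (witnessPt i) (1 / 100)) := h₄.le

lemma IsTangentMeasure.exists_isCornerAt {μ : Measure (Ed d)} [IsLocallyFiniteMeasure μ]
    {x : Ed d} (h : IsTangentMeasure μ x (volume.restrict (orthant d))) (i : Fin d) {δ : ℝ}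
    (hδ : 0 < δ) : ∃ σ ≤ δ, IsCornerAt i μ x σ := by
  obtain ⟨-, -, r, c, hr, -, hr₀, -, hw⟩ := h
  obtain ⟨n, hn, hrn⟩ := ((hw.eventually_isUnitCorner
    (fun n => isFiniteMeasureOnCompacts_blowup (hr n) (c n)) i).and
    (hr₀.eventually_le_const hδ)).exists
  rw [blowup_eq_smul] at hn
  exact ⟨r n, hrn, hr n, hn.of_smul ENNReal.ofReal_ne_top⟩

lemma dist_add_smul_recentrePt_self (x : Ed d) {σ : ℝ} (hσ : 0 ≤ σ) (i : Fin d) :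
    dist (x + σ • recentrePt i) x = 3 / 10 * σ := by
  rw [dist_self_add_left, norm_smul, norm_recentrePt, Real.norm_of_nonneg hσ, mul_comm]

lemma closedBall_witnessPt_subset {i : Fin d} {x z : Ed d} {σ τ : ℝ} (hσ : 0 < σ)
    (hz : dist z (x + σ • recentrePt i) ≤ σ / 10) (hτ : σ / 1000 ≤ τ) (hτ' : τ ≤ 11 / 10 * σ) :
    closedBall (x + σ • witnessPt i) (σ * (1 / 100)) ⊆
      closedBall z (τ * 1000) ∩ {y | y i ≤ z i + τ * -(1 / 20)} := by
  intro u hu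
  have hWV : dist (x + σ • witnessPt i) (x + σ • recentrePt i) = σ / 5 := by
    rw [dist_add_left, dist_smul₀, dist_witnessPt_recentrePt, Real.norm_of_nonneg hσ.le]
    ring
  refine ⟨?_, ?_⟩
  · rw [mem_closedBall] at hu ⊢
    linarith [dist_triangle4 u (x + σ • witnessPt i) (x + σ • recentrePt i) z,
      dist_comm z (x + σ • recentrePt i)]
  · have hu' := (abs_le.1 ((abs_apply_sub_apply_le_dist u _ i).trans (mem_closedBall.1 hu))).2
    have hz' := (abs_le.1 ((abs_apply_sub_apply_le_dist z _ i).trans hz)).1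
    simp only [witnessPt, recentrePt, PiLp.add_apply, PiLp.smul_apply, PiLp.single_apply,
      if_true, smul_eq_mul] at hu' hz'
    show u i ≤ z i + τ * -(1 / 20)
    linarith

lemma IsCornerAt.not_isCornerAt_of_dist_le {μ : Measure (Ed d)} [IsLocallyFiniteMeasure μ]
    {i : Fin d} {x z : Ed d} {σ τ : ℝ} (hx : IsCornerAt i μ x σ)
    (hz : dist z (x + σ • recentrePt i) ≤ σ / 10) (hτ : σ / 1000 ≤ τ) (hτ' : τ ≤ 11 / 10 * σ) :
    ¬ IsCornerAt i μ z τ := by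
  rintro ⟨hτ₀, hzc⟩
  obtain ⟨hσ, hxc⟩ := hx
  have hN := hxc.closedBall_ne_zero
  have hD := hxc.doubling
  have hW := hxc.witness
  have hV := hzc.vacuum
  simp only [blowup_apply_closedBall _ _ hσ, blowup_apply_closedBall_inter _ _ hτ₀,
    blowup_apply_closedBall _ _ hτ₀, ENNReal.ofReal_one, one_mul, smul_zero, add_zero,
    mul_one] at hN hD hW hV
  have hBsub : closedBall z τ ⊆ closedBall x (σ * 2) := by
    have := dist_add_smul_recentrePt_self x hσ.le i
    exact closedBall_subset_closedBall' (by linarith [dist_triangle z (x + σ • recentrePt i) x])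
  have key : witnessConst i * μ (closedBall x σ) ≤ witnessConst i / 2 * μ (closedBall x σ) :=
    calc witnessConst i * μ (closedBall x σ)
        ≤ μ (closedBall (x + σ • witnessPt i) (σ * (1 / 100))) := hW
      _ ≤ μ (closedBall z (τ * 1000) ∩ {y | y i ≤ z i + τ * -(1 / 20)}) :=
        measure_mono (closedBall_witnessPt_subset hσ hz hτ hτ')
      _ ≤ vacuumConst i * μ (closedBall z τ) := hV
      _ ≤ vacuumConst i * μ (closedBall x (σ * 2)) := by gcongr
      _ ≤ vacuumConst i * (doublingConst d * μ (closedBall x σ)) := by gcongr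
      _ = witnessConst i / 2 * μ (closedBall x σ) := by
        rw [← mul_assoc, vacuumConst_mul_doublingConst]
  exact (ENNReal.half_lt_self (witnessConst_ne_zero i) (witnessConst_ne_top i)).not_ge
    ((ENNReal.mul_le_mul_iff_left hN measure_closedBall_lt_top.ne).1 key)

section Scales

variable {X : Type*} [PseudoMetricSpace X]

lemma exists_maximal_scale {P : X → ℝ → Prop}
    (hP : ∀ x σ, P x σ → 0 < σ) {x : X} {σ B : ℝ} (hx : P x σ) (hσB : σ ≤ B) :
    ∃ xc σc, P xc σc ∧ σ ≤ σc ∧ σc ≤ B ∧ dist xc x ≤ 10 * (σc - σ) ∧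
      ∀ z τ, dist z xc ≤ σc → 11 / 10 * σc < τ → τ ≤ B → ¬ P z τ := by
  obtain ⟨n, hn⟩ := pow_unbounded_of_one_lt (B / σ) (by norm_num : (1 : ℝ) < 11 / 10)
  have hBn : B ≤ σ * (11 / 10) ^ n := by
    rw [div_lt_iff₀ (hP x σ hx)] at hn
    linarith
  clear hn
  induction n generalizing x σ with
  | zero =>
    refine ⟨x, σ, hx, le_rfl, hσB, by simp, fun z τ _ hτ hτB _ => ?_⟩
    linarith [hP x σ hx]
  | succ n ih =>
    -- Otherwise jump to a corner `(z, τ)` with `τ > 11σ/10`; the move `dist z x ≤ σ` is then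
    -- paid for by the gain `10 (τ - σ) > σ` in scale.
    by_cases hmax : ∀ z τ, dist z x ≤ σ → 11 / 10 * σ < τ → τ ≤ B → ¬ P z τ
    · exact ⟨x, σ, hx, le_rfl, hσB, by simp, hmax⟩
    push Not at hmax
    obtain ⟨z, τ, hzx, hστ, hτB, hz⟩ := hmax
    obtain ⟨xc, σc, hc, hτσc, hσcB, hxcz, hfree⟩ :=
      ih hz hτB (by rw [pow_succ] at hBn; nlinarith [pow_pos (by norm_num : (0 : ℝ) < 11 / 10) n])
    refine ⟨xc, σc, hc, by linarith [hP x σ hx], hσcB, ?_, hfree⟩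
    linarith [dist_triangle xc z x]

-- Iterated, steps of length `≤ 36 B` with `B' ≤ B / 4` keep all later centres, and their limit,
-- within `36 B' (1 + 1/4 + 1/16 + ⋯) = 48 B'` of `y'`.
structure IsScaleStep (S : Set X) (P : X → ℝ → Prop) (y : X) (B : ℝ) (y' : X) (B' : ℝ) :
    Prop where
  pos : 0 < B'
  le_quarter : B' ≤ B / 4
  dist_le : dist y' y ≤ 36 * B
  exists_mem_near : ∃ s ∈ S, dist s y' ≤ 10 * B'
  not_prop : ∀ u τ, B' ≤ τ → τ ≤ B → dist u y' ≤ 48 * B' → ¬ P u τ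

variable {S : Set X} {P : X → ℝ → Prop}

lemma exists_seq_isScaleStep {x₀ : X} (hx₀ : x₀ ∈ S)
    (hstep : ∀ y B, 0 < B → (∃ s ∈ S, dist s y ≤ 10 * B) → ∃ y' B', IsScaleStep S P y B y' B') :
    ∃ (y : ℕ → X) (B : ℕ → ℝ), B 0 = 1 ∧
      ∀ n, IsScaleStep S P (y n) (B n) (y (n + 1)) (B (n + 1)) := by
  let T := {p : X × ℝ // 0 < p.2 ∧ ∃ s ∈ S, dist s p.1 ≤ 10 * p.2}
  have hnext : ∀ p : T, ∃ q : T, IsScaleStep S P p.1.1 p.1.2 q.1.1 q.1.2 := by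
    rintro ⟨⟨y, B⟩, hB, hy⟩
    obtain ⟨y', B', h⟩ := hstep y B hB hy
    exact ⟨⟨(y', B'), h.pos, h.exists_mem_near⟩, h⟩
  choose next hnext using hnext
  let p : ℕ → T := fun n => next^[n] ⟨(x₀, 1), one_pos, x₀, hx₀, by simp⟩
  refine ⟨fun n => (p n).1.1, fun n => (p n).1.2, rfl, fun n => ?_⟩
  simp only [p, Function.iterate_succ_apply']
  exact hnext _

variable {y : ℕ → X} {B : ℕ → ℝ}

lemma IsScaleStep.le_mul_pow (h : ∀ n, IsScaleStep S P (y n) (B n) (y (n + 1)) (B (n + 1)))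
    (m k : ℕ) : B (m + k) ≤ B m * (1 / 4) ^ k := by
  induction k with
  | zero => simp
  | succ k ih =>
    rw [← add_assoc, pow_succ]
    linarith [(h (m + k)).le_quarter]

lemma IsScaleStep.exists_dist_le [CompleteSpace X]
    (h : ∀ n, IsScaleStep S P (y n) (B n) (y (n + 1)) (B (n + 1))) :
    ∃ x, ∀ m, dist (y m) x ≤ 48 * B m := by
  have hdist : ∀ m k, dist (y (m + k)) (y (m + k + 1)) ≤ 36 * B m * (1 / 4) ^ k := fun m k => by
    rw [dist_comm]
    nlinarith [(h (m + k)).dist_le, IsScaleStep.le_mul_pow h m k]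
  obtain ⟨x, hx⟩ := cauchySeq_tendsto_of_complete
    (cauchySeq_of_le_geometric (1 / 4) (36 * B 0) (by norm_num) (by simpa using hdist 0))
  refine ⟨x, fun m => ?_⟩
  have := dist_le_of_le_geometric_of_tendsto₀ (1 / 4) (36 * B m) (f := fun k => y (m + k))
    (by norm_num) (hdist m) ((hx.comp (tendsto_add_atTop_nat m)).congr fun k => by simp [add_comm])
  norm_num at this
  linarith

lemma exists_mem_forall_not_of_isScaleStep [CompleteSpace X] (hS : IsClosed S) {x₀ : X}
    (hx₀ : x₀ ∈ S)
    (hstep : ∀ y B, 0 < B → (∃ s ∈ S, dist s y ≤ 10 * B) → ∃ y' B', IsScaleStep S P y B y' B') :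
    ∃ x ∈ S, ∀ τ, 0 < τ → τ ≤ 1 → ¬ P x τ := by
  obtain ⟨y, B, hB₀, h⟩ := exists_seq_isScaleStep hx₀ hstep
  obtain ⟨x, hx⟩ := IsScaleStep.exists_dist_le h
  have hB : ∀ n, B n ≤ (1 / 4) ^ n := fun n => by
    simpa [hB₀] using IsScaleStep.le_mul_pow h 0 n
  have hxS : x ∈ S := by
    rw [← hS.closure_eq, Metric.mem_closure_iff]
    intro ε hε
    obtain ⟨n, hn⟩ := exists_pow_lt_of_lt_one (by positivity : 0 < ε / 58)
      (by norm_num : (1 / 4 : ℝ) < 1)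
    obtain ⟨s, hs, hsy⟩ := (h n).exists_mem_near
    refine ⟨s, hs, (dist_triangle x (y (n + 1)) s).trans_lt ?_⟩
    rw [dist_comm x, dist_comm _ s]
    have := hB (n + 1)
    rw [pow_succ] at this
    nlinarith [hx (n + 1), pow_pos (by norm_num : (0 : ℝ) < 1 / 4) n, (h n).pos]
  have hstepx : ∀ n τ, B (n + 1) ≤ τ → τ ≤ B n → ¬ P x τ := fun n τ h₁ h₂ =>
    (h n).not_prop x τ h₁ h₂ (by rw [dist_comm]; linarith [hx (n + 1), (h n).pos])
  have hfree : ∀ n τ, B n ≤ τ → τ ≤ 1 → ¬ P x τ := by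
    intro n
    induction n with
    | zero => exact fun τ _ hτ => hstepx 0 τ (by linarith [(h 0).le_quarter]) (hB₀ ▸ hτ)
    | succ n ih =>
      intro τ h₁ h₂
      by_cases hτ : B n ≤ τ
      · exact ih τ hτ h₂
      · exact hstepx n τ h₁ (le_of_not_ge hτ)
  refine ⟨x, hxS, fun τ hτ₀ hτ₁ => ?_⟩
  obtain ⟨n, hn⟩ := exists_pow_lt_of_lt_one hτ₀ (by norm_num : (1 / 4 : ℝ) < 1)
  exact hfree n τ ((hB n).trans hn.le) hτ₁

end Scales

lemma exists_isScaleStep_isCornerAt (μ : Measure (Ed d)) [IsLocallyFiniteMeasure μ] (i : Fin d)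
    {y : Ed d} {B : ℝ} (hB : 0 < B) (hy : ∃ s ∈ sptM μ, dist s y ≤ 10 * B) :
    ∃ y' B', IsScaleStep (sptM μ) (IsCornerAt i μ) y B y' B' := by
  by_cases hnear : ∃ z σ, dist z y ≤ 25 * B ∧ σ ≤ B ∧ IsCornerAt i μ z σ
  · obtain ⟨z, σ, hzy, hσB, hz⟩ := hnear
    obtain ⟨xc, σc, hc, hσσc, hσcB, hxcz, hmax⟩ :=
      exists_maximal_scale (fun _ _ h => h.1) hz hσB
    have hσc : 0 < σc := hc.1
    have hrec := dist_add_smul_recentrePt_self xc hσc.le i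
    refine ⟨xc + σc • recentrePt i, σc / 1000, by positivity, by linarith, ?_, ?_, ?_⟩
    · linarith [dist_triangle4 (xc + σc • recentrePt i) xc z y, hz.1]
    · have h := hc.2.recentre_ne_zero
      rw [blowup_apply_closedBall _ _ hσc, ENNReal.ofReal_one, one_mul] at h
      obtain ⟨s, hs, hsd⟩ := exists_mem_sptM_dist_le h
      exact ⟨s, hs, by linarith⟩
    · intro u τ hτ₁ hτ₂ hu
      by_cases hτ : τ ≤ 11 / 10 * σc
      · exact hc.not_isCornerAt_of_dist_le (by linarith) hτ₁ hτ
      · exact hmax u τ (by linarith [dist_triangle u (xc + σc • recentrePt i) xc]) (not_le.1 hτ)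
          hτ₂
  · push Not at hnear
    obtain ⟨s, hs, hsy⟩ := hy
    exact ⟨s, B / 4, by positivity, le_rfl, by linarith, ⟨s, hs, by rw [dist_self]; positivity⟩,
      fun u τ _ hτ hu => hnear u τ (by linarith [dist_triangle u s y]) hτ⟩

end

/-- if `μ` is a Radon measure on ℝ^d with non-empty support, then there is
`x ∈ spt μ` with `L^d ∉ Tan(μ,x)` or `L^{d,+} ∉ Tan(μ,x)`, where `L^{d,+} = L^d ⌞ ℝ^{d,+}`. -/
theorem stmt_7 (d : ℕ) (hd : 0 < d) (μ : Measure (Ed d))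
    (hRadon : IsLocallyFiniteMeasure μ) (hspt : (sptM μ).Nonempty) :
    ∃ x ∈ sptM μ,
      ¬ IsTangentMeasure μ x volume ∨
      ¬ IsTangentMeasure μ x (volume.restrict (orthant d)) := by
  obtain ⟨x₀, hx₀⟩ := hspt
  let i : Fin d := ⟨0, hd⟩
  obtain ⟨x, hx, hfree⟩ := exists_mem_forall_not_of_isScaleStep (isClosed_sptM μ) hx₀
    fun y B hB hy => exists_isScaleStep_isCornerAt μ i hB hy
  refine ⟨x, hx, Or.inr fun ht => ?_⟩
  obtain ⟨σ, hσ, hcorner⟩ := IsTangentMeasure.exists_isCornerAt ht i one_pos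
  exact hfree σ hcorner.1 hσ hcorner

end
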